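/- There exists a bijection ψ : S_n(M, I) → S_n(M, I) (for any M, I ⊆ [n] with |M| = |I|, n ∈ M ∩ I) which is an involution satisfying (ca(π), ci(π)) = (ci(ψ(π)), ca(ψ(π))) for all π, and which fixes the number |A⁻(π)| of non-inversions not contained in any occurrence of 123. Consequently the statistic mix(π) = |A⁻(π)| + |I⁺(π)| is Mahonian, i.e., equidistributed with the number of inversions over S_n. -/

import Mathlib

open Finset

/-- `τ ∈ S_n(M, I)`: the right-to-left maxima of `τ` occur exactly at the positions
in `I`, and the set of their values is `M`. -/
def SMI {n : ℕ} (M I : Finset (Fin n)) (τ : Equiv.Perm (Fin n)) : Prop :=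
  (∀ j : Fin n, ((∀ i : Fin n, j < i → τ i < τ j) ↔ j ∈ I)) ∧ I.image τ = M

/-- `ci(τ)(y) = |I⁺_y|`: the number of values `x` with `(y, x)` an inversion of `τ`
playing the role of `21` in some occurrence of `213`. -/
def ci {n : ℕ} (τ : Equiv.Perm (Fin n)) (y : Fin n) : ℕ :=
  (univ.filter fun x : Fin n =>
    τ.symm y < τ.symm x ∧ x < y ∧ ∃ z : Fin n, τ.symm x < τ.symm z ∧ y < z).card

/-- `ca(τ)(y) = |A⁺_y|`: the number of values `x` with `(x, y)` a non-inversion of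
`τ` playing the role of `12` in some occurrence of `123`. -/
def ca {n : ℕ} (τ : Equiv.Perm (Fin n)) (y : Fin n) : ℕ :=
  (univ.filter fun x : Fin n =>
    τ.symm x < τ.symm y ∧ x < y ∧ ∃ z : Fin n, τ.symm y < τ.symm z ∧ y < z).card

/-- `|A⁻(τ)|`: the number of non-inversions of `τ` (pairs of positions `i < j` with
`τ(i) < τ(j)`) that do not play the role of `12` in any occurrence of `123`. -/
def Aminus {n : ℕ} (τ : Equiv.Perm (Fin n)) : ℕ :=
  (univ.filter fun p : Fin n × Fin n =>
    p.1 < p.2 ∧ τ p.1 < τ p.2 ∧ ¬ ∃ k : Fin n, p.2 < k ∧ τ p.2 < τ k).card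

/-- `|I⁺(τ)|`: the number of inversions of `τ` playing the role of `21` in some
occurrence of `213`. -/
def Iplus {n : ℕ} (τ : Equiv.Perm (Fin n)) : ℕ :=
  (univ.filter fun p : Fin n × Fin n =>
    p.1 < p.2 ∧ τ p.2 < τ p.1 ∧ ∃ k : Fin n, p.2 < k ∧ τ p.1 < τ k).card

/-!
For `τ ∈ S_n(M, I)` and `v ∉ M`, `ca(τ)(v)` counts the smaller values to the left of `v`, and
`ci(τ)(v)` the smaller values to its right but left of the last right-to-left maximum exceeding
`v`. The right-to-left maxima and their values are fixed by `(M, I)`, and so is the sum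
`ca(τ)(v) + ci(τ)(v)`: together with `v` and the larger values these are exactly the entries up
to that maximum. The vector `(ca(τ)(v))_{v ∉ M}` determines `τ`, and exchanging `v` with a
nearest smaller value moves it by one in a single coordinate, so it takes every value below that
bound. Hence `ψ(τ)` can be chosen with `ca(ψτ) = ci(τ)`, and then also `ci(ψτ) = ca(τ)`.
Likewise `|A⁻(τ)| = ∑_{j ∈ I} j - ∑_{m ∈ M} #{x > m}` depends only on `(M, I)`.

Summing over `v`, `mix(ψπ) = |A⁻(π)| + ∑ ca(π)` is the number of non-inversions of `π`, and
composing `ψ` with the reversal of positions turns `mix` into the number of inversions.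
-/

theorem Finset.card_filter_prod_eq_sum_left {α β : Type*} [Fintype α] [Fintype β]
    (P : α → β → Prop) [∀ a b, Decidable (P a b)] :
    #{p : α × β | P p.1 p.2} = ∑ a, #{b | P a b} := by
  simp only [Finset.card_filter]
  exact Fintype.sum_prod_type _

theorem Finset.card_filter_prod_eq_sum_right {α β : Type*} [Fintype α] [Fintype β]
    (P : α → β → Prop) [∀ a b, Decidable (P a b)] :
    #{p : α × β | P p.1 p.2} = ∑ b, #{a | P a b} := by
  rw [card_filter_prod_eq_sum_left]
  simp only [Finset.card_filter]
  exact Finset.sum_comm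

theorem Finset.eq_of_card_filter_lt_eq {α : Type*} [LinearOrder α] {s : Finset α} {a b : α}
    (ha : a ∈ s) (hb : b ∈ s) (h : #{x ∈ s | a < x} = #{x ∈ s | b < x}) : a = b := by
  have hlt : ∀ {c d}, d ∈ s → c < d → #{x ∈ s | d < x} < #{x ∈ s | c < x} := by
    intro c d hd hcd
    refine card_lt_card ((ssubset_iff_of_subset fun x hx => ?_).2
      ⟨d, mem_filter.2 ⟨hd, hcd⟩, by simp⟩)
    simp only [mem_filter] at hx ⊢
    exact ⟨hx.1, hcd.trans hx.2⟩
  rcases lt_trichotomy a b with hab | rfl | hba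
  · exact absurd h (hlt hb hab).ne'
  · rfl
  · exact absurd h (hlt ha hba).ne

namespace Equiv.Perm

variable {n : ℕ}

def smallerLeft (τ : Perm (Fin n)) (v : Fin n) : ℕ :=
  #{x | x < v ∧ τ.symm x < τ.symm v}

/-- The position of the last right-to-left maximum (from `I`) whose value exceeds `v`;
it is `0` when there is none, which does not happen for `v ∉ M`. -/
def lastMaxAbove (I : Finset (Fin n)) (τ : Perm (Fin n)) (v : Fin n) : ℕ :=
  (I.filter (v < τ ·)).sup (↑)

def smallerRightBefore (I : Finset (Fin n)) (τ : Perm (Fin n)) (v : Fin n) : ℕ :=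
  #{x | x < v ∧ τ.symm v < τ.symm x ∧ (τ.symm x : ℕ) < lastMaxAbove I τ v}

def rlMaxPositions (τ : Perm (Fin n)) : Finset (Fin n) := {j | ∀ i, j < i → τ i < τ j}

theorem smi_rlMaxPositions (τ : Perm (Fin n)) :
    SMI ((rlMaxPositions τ).image τ) (rlMaxPositions τ) τ :=
  ⟨fun j => by simp [rlMaxPositions], rfl⟩

theorem le_lastMaxAbove {I : Finset (Fin n)} {τ : Perm (Fin n)} {j v : Fin n} (hj : j ∈ I)
    (hv : v < τ j) : (j : ℕ) ≤ lastMaxAbove I τ v :=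
  Finset.le_sup (f := ((↑) : Fin n → ℕ)) (Finset.mem_filter.2 ⟨hj, hv⟩)

theorem lastMaxAbove_antitone (I : Finset (Fin n)) (τ : Perm (Fin n)) :
    Antitone (lastMaxAbove I τ) := fun _ _ hvw => Finset.sup_mono fun _ hj => by
  simp only [Finset.mem_filter] at hj ⊢
  exact ⟨hj.1, hvw.trans_lt hj.2⟩

theorem smallerLeft_add_card_gt (τ : Perm (Fin n)) (v : Fin n) :
    τ.smallerLeft v + #{x | v < x ∧ τ.symm x < τ.symm v} = τ.symm v := by
  have hW : #{x | τ.symm x < τ.symm v} = (τ.symm v : ℕ) := by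
    rw [Finset.card_equiv τ.symm (t := Finset.Iio (τ.symm v)) (by simp), Fin.card_Iio]
  rw [← hW, smallerLeft]
  simp only [Finset.card_filter, ← Finset.sum_add_distrib]
  refine Finset.sum_congr rfl fun x _ => ?_
  have hxv : τ.symm x = τ.symm v ↔ x = v := τ.symm.injective.eq_iff
  split_ifs <;> omega

theorem smallerLeft_lt_of_symm_lt {τ τ' : Perm (Fin n)} {v : Fin n}
    (hgt : ∀ x, v < x → τ.symm x = τ'.symm x) (hlt : τ.symm v < τ'.symm v) :
    τ.smallerLeft v < τ'.smallerLeft v := by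
  have h := τ.smallerLeft_add_card_gt v
  have h' := τ'.smallerLeft_add_card_gt v
  have hτ' : #{x | v < x ∧ τ'.symm x < τ'.symm v} = #{x | v < x ∧ τ.symm x < τ'.symm v} :=
    congrArg Finset.card (Finset.filter_congr fun x _ => by
      constructor <;> rintro ⟨hx, hpos⟩ <;> simp_all)
  have hsplit : #{x | v < x ∧ τ.symm x < τ'.symm v} = #{x | v < x ∧ τ.symm x < τ.symm v} +
      #{x | v < x ∧ τ.symm v < τ.symm x ∧ τ.symm x < τ'.symm v} := by
    simp only [Finset.card_filter, ← Finset.sum_add_distrib]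
    refine Finset.sum_congr rfl fun x _ => ?_
    have hxv : τ.symm x = τ.symm v ↔ x = v := τ.symm.injective.eq_iff
    split_ifs <;> omega
  have hmid : #{x | v < x ∧ τ.symm v < τ.symm x ∧ τ.symm x < τ'.symm v} ≤
      (τ'.symm v : ℕ) - τ.symm v - 1 :=
    calc _ ≤ #{x | τ.symm x ∈ Finset.Ioo (τ.symm v) (τ'.symm v)} :=
          Finset.card_le_card fun x => by simp +contextual
      _ = _ := by
        rw [Finset.card_equiv τ.symm (t := Finset.Ioo (τ.symm v) (τ'.symm v)) (by simp),
          Fin.card_Ioo]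
  omega

theorem symm_lt_or_lt_symm_of_between {τ : Perm (Fin n)} {u v w : Fin n}
    (hbetween : ∀ r, τ.symm u < r → r < τ.symm v → v < τ r) (hwv : w < v) (hwu : w ≠ u) :
    τ.symm w < τ.symm u ∨ τ.symm v < τ.symm w := by
  by_contra! hc
  have := hbetween (τ.symm w) (hc.1.lt_of_ne' (τ.symm.injective.ne hwu))
    (hc.2.lt_of_ne (τ.symm.injective.ne hwv.ne))
  rw [τ.apply_symm_apply] at this
  exact this.not_gt hwv

theorem symm_swap_mul_apply (τ : Perm (Fin n)) (u v w : Fin n) :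
    (swap u v * τ).symm w = τ.symm (swap u v w) := by
  rw [mul_def, Equiv.symm_trans_apply, symm_swap]

/-- Exchanging `v` with the nearest smaller value `u` to its left removes `u` from the values
left of `v`, and no other smaller value crosses `v`. -/
theorem smallerLeft_swap_mul_self {τ : Perm (Fin n)} {u v : Fin n} (huv : u < v)
    (hpos : τ.symm u < τ.symm v)
    (hbetween : ∀ r, τ.symm u < r → r < τ.symm v → v < τ r) :
    (swap u v * τ).smallerLeft v + 1 = τ.smallerLeft v := by
  have hone : (1 : ℕ) = ∑ w, if w = u then 1 else 0 := by simp
  rw [hone, smallerLeft, smallerLeft]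
  simp only [Finset.card_filter, ← Finset.sum_add_distrib, symm_swap_mul_apply,
    swap_apply_right]
  refine Finset.sum_congr rfl fun w _ => ?_
  by_cases hwu : w = u
  · subst hwu; simp [huv, hpos, hpos.not_gt]
  by_cases hwv : w = v
  · subst hwv; simp [hwu]
  have := symm_lt_or_lt_symm_of_between (w := w) hbetween
  simp only [swap_apply_of_ne_of_ne hwu hwv, hwu, if_false]
  split_ifs <;> omega

/-- A value `x > v` sees `v` in place of `u` (the bijection is `swap u v`); for `x < v` nothing
changes, since no value below `v` lies strictly between the positions of `u` and `v`. -/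
theorem smallerLeft_swap_mul_of_ne {τ : Perm (Fin n)} {u v x : Fin n} (huv : u < v)
    (hpos : τ.symm u < τ.symm v)
    (hbetween : ∀ r, τ.symm u < r → r < τ.symm v → v < τ r) (hxv : x ≠ v) :
    (swap u v * τ).smallerLeft x = τ.smallerLeft x := by
  have hout := fun w => symm_lt_or_lt_symm_of_between (w := w) hbetween
  have hu : swap u v u = v := swap_apply_left u v
  have hne : ∀ w, w ≠ u → w ≠ v → swap u v w = w := fun w => swap_apply_of_ne_of_ne
  rcases lt_or_gt_of_ne hxv with hxv | hvx
  · refine congrArg Finset.card (Finset.filter_congr fun w _ => ?_)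
    rw [symm_swap_mul_apply, symm_swap_mul_apply]
    by_cases hxu : x = u
    · subst hxu
      by_cases hwx : w < x
      · have := hout w (hwx.trans huv) hwx.ne
        rw [hu, hne w hwx.ne (hwx.trans huv).ne]
        omega
      · simp [hwx]
    rw [hne x hxu hxv.ne]
    have := hout x hxv hxu
    by_cases hwu : w = u
    · subst hwu; rw [hu]; omega
    by_cases hwv : w = v
    · subst hwv; simp [hxv.not_gt]
    · rw [hne w hwu hwv]
  · refine Finset.card_equiv (swap u v) fun w => ?_
    simp only [Finset.mem_filter, Finset.mem_univ, true_and, symm_swap_mul_apply,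
      hne x (huv.trans hvx).ne' hvx.ne']
    by_cases hwu : w = u
    · subst hwu; simp [hu, huv.trans hvx, hvx]
    by_cases hwv : w = v
    · subst hwv; simp [huv.trans hvx, hvx]
    · rw [hne w hwu hwv]

theorem smallerLeft_mul_swap {τ : Perm (Fin n)} {a b : Fin n} (hab : a < b) (hτ : τ a < τ b)
    (hbetween : ∀ r, a < r → r < b → τ b < τ r) :
    (τ * swap a b).smallerLeft (τ b) + 1 = τ.smallerLeft (τ b) ∧
      ∀ x ≠ τ b, (τ * swap a b).smallerLeft x = τ.smallerLeft x := by
  rw [mul_swap_eq_swap_mul]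
  have hpos : τ.symm (τ a) < τ.symm (τ b) := by simpa using hab
  have hbetween' : ∀ r, τ.symm (τ a) < r → r < τ.symm (τ b) → τ b < τ r := by
    simpa using hbetween
  exact ⟨smallerLeft_swap_mul_self hτ hpos hbetween',
    fun x hx => smallerLeft_swap_mul_of_ne hτ hpos hbetween' hx⟩

theorem exists_nearest_left {τ : Perm (Fin n)} {a b : Fin n} (hab : a < b) (hτ : τ a < τ b) :
    ∃ a', a' < b ∧ τ a' < τ b ∧ ∀ r, a' < r → r < b → τ b < τ r := by
  obtain ⟨a', ha', hmax⟩ := Finset.exists_max_image {q | q < b ∧ τ q < τ b} id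
    ⟨a, by simp [hab, hτ]⟩
  simp only [Finset.mem_filter, Finset.mem_univ, true_and, id] at ha' hmax
  refine ⟨a', ha'.1, ha'.2, fun r har hrb => lt_of_le_of_ne (not_lt.1 fun hr => ?_)
    (τ.injective.ne hrb.ne')⟩
  exact (hmax r ⟨hrb, hr⟩).not_gt har

theorem exists_nearest_right {τ : Perm (Fin n)} {b c : Fin n} (hbc : b < c) (hτ : τ c < τ b) :
    ∃ c', b < c' ∧ c' ≤ c ∧ τ c' < τ b ∧ ∀ r, b < r → r < c' → τ b < τ r := by
  obtain ⟨c', hc', hmin⟩ := Finset.exists_min_image {q | b < q ∧ τ q < τ b} id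
    ⟨c, by simp [hbc, hτ]⟩
  simp only [Finset.mem_filter, Finset.mem_univ, true_and, id] at hc' hmin
  refine ⟨c', hc'.1, hmin c ⟨hbc, hτ⟩, hc'.2, fun r hbr hrc => lt_of_le_of_ne
    (not_lt.1 fun hr => ?_) (τ.injective.ne hbr.ne)⟩
  exact (hmin r ⟨hbr, hr⟩).not_gt hrc

end Equiv.Perm

open Equiv Equiv.Perm

namespace SMI

variable {n : ℕ} {M I : Finset (Fin n)} {τ τ' : Perm (Fin n)} {a b i j p v x : Fin n}

theorem eq_rlMaxPositions (h : SMI M I τ) :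
    I = rlMaxPositions τ ∧ M = (rlMaxPositions τ).image τ := by
  have hI : I = rlMaxPositions τ := by ext j; simp [rlMaxPositions, h.1 j]
  exact ⟨hI, hI ▸ h.2.symm⟩

theorem apply_lt (h : SMI M I τ) (hj : j ∈ I) (hji : j < i) : τ i < τ j :=
  (h.1 j).2 hj i hji

theorem mem_iff (h : SMI M I τ) : v ∈ M ↔ τ.symm v ∈ I := by
  rw [← h.2, Finset.mem_image]
  exact ⟨fun ⟨j, hj, hjv⟩ => by simpa [← hjv],
    fun hv => ⟨_, hv, τ.apply_symm_apply v⟩⟩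

theorem apply_mem (h : SMI M I τ) (hj : j ∈ I) : τ j ∈ M :=
  h.2 ▸ Finset.mem_image_of_mem τ hj

theorem exists_mem_gt (h : SMI M I τ) (hp : p ∉ I) : ∃ j ∈ I, p < j ∧ τ p < τ j := by
  have : ¬ ∀ i, p < i → τ i < τ p := fun hall => hp ((h.1 p).1 hall)
  push Not at this
  obtain ⟨i, hpi, hi⟩ := this
  obtain ⟨j, hj, hmax⟩ := (Finset.Ioi p).exists_max_image τ ⟨i, Finset.mem_Ioi.2 hpi⟩
  rw [Finset.mem_Ioi] at hj
  refine ⟨j, (h.1 j).1 fun k hk => ?_, hj, ?_⟩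
  · exact (hmax k (Finset.mem_Ioi.2 (hj.trans hk))).lt_of_ne (τ.injective.ne hk.ne')
  · exact (hi.lt_of_ne (τ.injective.ne hpi.ne)).trans_le (hmax i (Finset.mem_Ioi.2 hpi))

theorem mem_iff_not_exists (h : SMI M I τ) : j ∈ I ↔ ¬ ∃ k, j < k ∧ τ j < τ k := by
  refine ⟨fun hj ⟨k, hjk, hk⟩ => (h.apply_lt hj hjk).not_gt hk, fun hj => ?_⟩
  by_contra hjI
  obtain ⟨k, -, hjk, hk⟩ := h.exists_mem_gt hjI
  exact hj ⟨k, hjk, hk⟩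

theorem exists_eq_lastMaxAbove (h : SMI M I τ) (hv : v ∉ M) :
    ∃ j ∈ I, (j : ℕ) = lastMaxAbove I τ v ∧ v < τ j := by
  obtain ⟨j, hj, -, hvj⟩ := h.exists_mem_gt (mt h.mem_iff.2 hv)
  rw [τ.apply_symm_apply] at hvj
  obtain ⟨k, hk, hkL⟩ := Finset.exists_mem_eq_sup (I.filter (v < τ ·))
    ⟨j, Finset.mem_filter.2 ⟨hj, hvj⟩⟩ ((↑) : Fin n → ℕ)
  exact ⟨k, (Finset.mem_filter.1 hk).1, hkL.symm, (Finset.mem_filter.1 hk).2⟩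

theorem symm_lt_lastMaxAbove (h : SMI M I τ) (hv : v ∉ M) :
    (τ.symm v : ℕ) < lastMaxAbove I τ v := by
  obtain ⟨j, hj, hpj, hvj⟩ := h.exists_mem_gt (mt h.mem_iff.2 hv)
  rw [τ.apply_symm_apply] at hvj
  exact lt_of_lt_of_le hpj (le_lastMaxAbove hj hvj)

theorem symm_le_lastMaxAbove (h : SMI M I τ) (hvx : v < x) :
    (τ.symm x : ℕ) ≤ lastMaxAbove I τ v := by
  by_cases hx : x ∈ M
  · exact le_lastMaxAbove (h.mem_iff.1 hx) (by rwa [τ.apply_symm_apply])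
  · exact (h.symm_lt_lastMaxAbove hx).le.trans (lastMaxAbove_antitone I τ hvx.le)

theorem ca_eq_smallerLeft (h : SMI M I τ) (hv : v ∉ M) : ca τ v = τ.smallerLeft v := by
  obtain ⟨j, -, hpj, hvj⟩ := h.exists_mem_gt (mt h.mem_iff.2 hv)
  rw [τ.apply_symm_apply] at hvj
  refine congrArg Finset.card (Finset.filter_congr fun x _ =>
    ⟨fun ⟨h1, h2, _⟩ => ⟨h2, h1⟩,
      fun ⟨h1, h2⟩ => ⟨h2, h1, τ j, by simpa using hpj, hvj⟩⟩)

theorem ci_eq_smallerRightBefore (h : SMI M I τ) (hv : v ∉ M) :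
    ci τ v = τ.smallerRightBefore I v := by
  obtain ⟨j, -, hjL, hvj⟩ := h.exists_eq_lastMaxAbove hv
  refine congrArg Finset.card (Finset.filter_congr fun x _ => ⟨?_, ?_⟩)
  · rintro ⟨h1, h2, z, hxz, hvz⟩
    have := h.symm_le_lastMaxAbove hvz
    exact ⟨h2, h1, by omega⟩
  · rintro ⟨h1, h2, h3⟩
    exact ⟨h2, h1, τ j, by simp only [Equiv.symm_apply_apply]; omega, hvj⟩

theorem ca_eq_zero (h : SMI M I τ) (hv : v ∈ M) : ca τ v = 0 := by
  refine Finset.card_eq_zero.2 (Finset.filter_eq_empty_iff.2 ?_)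
  rintro x - ⟨-, -, z, hvz, hz⟩
  exact (h.apply_lt (h.mem_iff.1 hv) hvz).not_gt (by simpa using hz)

theorem ci_eq_zero (h : SMI M I τ) (hv : v ∈ M) : ci τ v = 0 := by
  refine Finset.card_eq_zero.2 (Finset.filter_eq_empty_iff.2 ?_)
  rintro x - ⟨hvx, -, z, hxz, hz⟩
  exact (h.apply_lt (h.mem_iff.1 hv) (hvx.trans hxz)).not_gt (by simpa using hz)

/-- The positions up to `lastMaxAbove I τ v` hold `v`, every larger value, and the smaller
values counted by `smallerLeft` and `smallerRightBefore`. -/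
theorem smallerLeft_add_smallerRightBefore (h : SMI M I τ) (hv : v ∉ M) :
    τ.smallerLeft v + τ.smallerRightBefore I v + #{x | v < x} = lastMaxAbove I τ v := by
  suffices τ.smallerLeft v + τ.smallerRightBefore I v + #{x | v < x} + 1 =
      lastMaxAbove I τ v + 1 by omega
  obtain ⟨j, -, hjL, hvj⟩ := h.exists_eq_lastMaxAbove hv
  have hvL := h.symm_lt_lastMaxAbove hv
  have hW : #{x | τ.symm x ≤ j} = lastMaxAbove I τ v + 1 := by
    rw [Finset.card_equiv τ.symm (t := Finset.Iic j) (by simp), Fin.card_Iic, hjL]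
  have hone : (1 : ℕ) = ∑ x, if x = v then 1 else 0 := by simp
  rw [← hW, hone, smallerLeft, smallerRightBefore]
  simp only [Finset.card_filter, ← Finset.sum_add_distrib]
  refine Finset.sum_congr rfl fun x _ => ?_
  have hxv : τ.symm x = τ.symm v ↔ x = v := τ.symm.injective.eq_iff
  have hgt : v < x → τ.symm x ≤ j := fun hvx => by
    have := h.symm_le_lastMaxAbove hvx; rw [Fin.le_def]; omega
  have hj : τ.symm x = j → v < x := fun hx => by rwa [← τ.apply_symm_apply x, hx]
  split_ifs <;> omega

theorem image_filter_lt (h : SMI M I τ) (hj : j ∈ I) :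
    (I.filter (· < j)).image τ = M.filter (τ j < ·) := by
  ext m
  simp only [Finset.mem_image, Finset.mem_filter]
  constructor
  · rintro ⟨i, ⟨hi, hij⟩, rfl⟩
    exact ⟨h.apply_mem hi, h.apply_lt hi hij⟩
  · rintro ⟨hm, hjm⟩
    refine ⟨τ.symm m, ⟨h.mem_iff.1 hm, lt_of_not_ge fun hji => ?_⟩, τ.apply_symm_apply m⟩
    rcases hji.lt_or_eq with hji | hji
    · exact (h.apply_lt hj hji).not_gt (by simpa using hjm)
    · exact hjm.ne (by simp [hji])

/-- `τ` maps `I` decreasingly onto `M`, so `τ j` is the element of `M` of the same rank. -/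
theorem apply_eq_of_mem (h : SMI M I τ) (h' : SMI M I τ') (hj : j ∈ I) : τ j = τ' j := by
  refine Finset.eq_of_card_filter_lt_eq (h.apply_mem hj) (h'.apply_mem hj) ?_
  rw [← h.image_filter_lt hj, ← h'.image_filter_lt hj,
    Finset.card_image_of_injective _ τ.injective, Finset.card_image_of_injective _ τ'.injective]

theorem symm_eq_of_mem (h : SMI M I τ) (h' : SMI M I τ') (hv : v ∈ M) :
    τ.symm v = τ'.symm v := by
  rw [Equiv.eq_symm_apply, ← h.apply_eq_of_mem h' (h.mem_iff.1 hv), τ.apply_symm_apply]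

theorem lastMaxAbove_eq (h : SMI M I τ) (h' : SMI M I τ') :
    lastMaxAbove I τ v = lastMaxAbove I τ' v := by
  unfold lastMaxAbove
  rw [Finset.filter_congr fun j hj => by rw [h.apply_eq_of_mem h' hj]]

theorem smallerLeft_add_smallerRightBefore_eq (h : SMI M I τ) (h' : SMI M I τ') (hv : v ∉ M) :
    τ.smallerLeft v + τ.smallerRightBefore I v =
      τ'.smallerLeft v + τ'.smallerRightBefore I v := by
  have := h.smallerLeft_add_smallerRightBefore hv
  have := h'.smallerLeft_add_smallerRightBefore hv
  have := h.lastMaxAbove_eq h' (v := v)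
  omega

theorem Aminus_eq_sum (h : SMI M I τ) : Aminus τ = ∑ j ∈ I, #{i | i < j ∧ τ i < τ j} := by
  refine (Finset.card_filter_prod_eq_sum_right
    fun i j => i < j ∧ τ i < τ j ∧ ¬ ∃ k, j < k ∧ τ j < τ k).trans ?_
  simp_rw [← h.mem_iff_not_exists]
  rw [← Finset.sum_subset (Finset.subset_univ I) fun j _ hj => ?_]
  · exact Finset.sum_congr rfl fun j hj => by simp only [hj, and_true]
  · simp [hj]

theorem card_lt_add_card_gt (h : SMI M I τ) (hj : j ∈ I) :
    #{i | i < j ∧ τ i < τ j} + #{x | τ j < x} = j := by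
  have hgt : #{x | τ j < x} = #{i | τ j < τ i} := (Finset.card_equiv τ (by simp)).symm
  have hj' : #{i | i < j} = (j : ℕ) := by rw [Finset.filter_gt_eq_Iio, Fin.card_Iio]
  rw [hgt, ← hj']
  simp only [Finset.card_filter, ← Finset.sum_add_distrib]
  refine Finset.sum_congr rfl fun i _ => ?_
  have hinj : τ i = τ j ↔ i = j := τ.injective.eq_iff
  have hlt : j < i → τ i < τ j := h.apply_lt hj
  split_ifs <;> omega

theorem Aminus_add_sum_card_gt (h : SMI M I τ) :
    Aminus τ + ∑ m ∈ M, #{x | m < x} = ∑ j ∈ I, (j : ℕ) := by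
  rw [h.Aminus_eq_sum, ← h.2, Finset.sum_image τ.injective.injOn, ← Finset.sum_add_distrib]
  exact Finset.sum_congr rfl fun j hj => h.card_lt_add_card_gt hj

theorem Aminus_eq (h : SMI M I τ) (h' : SMI M I τ') : Aminus τ = Aminus τ' := by
  have := h.Aminus_add_sum_card_gt
  have := h'.Aminus_add_sum_card_gt
  omega

/-- Downward induction on values: once the positions of the values above `v` are known,
`smallerLeft v` pins down the position of `v`. -/
theorem eq_of_smallerLeft_eq (h : SMI M I τ) (h' : SMI M I τ')
    (heq : ∀ v ∉ M, τ.smallerLeft v = τ'.smallerLeft v) : τ = τ' := by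
  have step : ∀ v, (∀ x, v < x → τ.symm x = τ'.symm x) → τ.symm v = τ'.symm v := by
    intro v hgt
    by_cases hv : v ∈ M
    · exact h.symm_eq_of_mem h' hv
    rcases lt_trichotomy (τ.symm v) (τ'.symm v) with hlt | heq' | hlt
    · exact absurd (heq v hv) (smallerLeft_lt_of_symm_lt hgt hlt).ne
    · exact heq'
    · exact absurd (heq v hv) (smallerLeft_lt_of_symm_lt (fun x hx => (hgt x hx).symm) hlt).ne'
  exact Equiv.symm_bijective.injective (Equiv.ext fun v => WellFoundedGT.induction v step)

theorem mul_swap (h : SMI M I τ) (hab : a < b) (ha : a ∉ I) (hb : b ∉ I)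
    (hwit : ∃ j ∈ I, b < j ∧ τ a < τ j) : SMI M I (τ * swap a b) := by
  have hfix : ∀ j ∈ I, (τ * swap a b) j = τ j := fun j hj => by
    rw [Perm.mul_apply, swap_apply_of_ne_of_ne (ne_of_mem_of_not_mem hj ha)
      (ne_of_mem_of_not_mem hj hb)]
  obtain ⟨j₀, hj₀, hbj₀, haj₀⟩ := hwit
  refine ⟨fun j => ⟨fun hmax => by_contra fun hj => ?_, fun hj i hji => ?_⟩,
    h.2 ▸ Finset.image_congr hfix⟩
  · obtain ⟨k, hk, hjk, hτk⟩ : ∃ k ∈ I, j < k ∧ (τ * swap a b) j < τ k := by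
      rw [Perm.mul_apply]
      by_cases hja : j = a
      · obtain ⟨k, hk, hbk, hτk⟩ := h.exists_mem_gt hb
        exact ⟨k, hk, hja ▸ hab.trans hbk, by rwa [hja, swap_apply_left]⟩
      by_cases hjb : j = b
      · exact ⟨j₀, hj₀, hjb ▸ hbj₀, by rwa [hjb, swap_apply_right]⟩
      · rw [swap_apply_of_ne_of_ne hja hjb]
        exact h.exists_mem_gt hj
    exact (hmax k hjk).not_gt (hfix k hk ▸ hτk)
  · rw [hfix j hj, Perm.mul_apply]
    by_cases hia : i = a
    · rw [hia, swap_apply_left]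
      exact h.apply_lt hj (hji.trans (hia ▸ hab))
    by_cases hib : i = b
    · rw [hib, swap_apply_right]
      rcases lt_or_gt_of_ne (ne_of_mem_of_not_mem hj ha) with hja | haj
      · exact h.apply_lt hj hja
      · exact haj₀.trans (h.apply_lt hj (hji.trans (hib ▸ hbj₀)))
    · rw [swap_apply_of_ne_of_ne hia hib]
      exact h.apply_lt hj hji

theorem exists_smallerLeft_pred (h : SMI M I τ) (hv : v ∉ M) (hpos : 0 < τ.smallerLeft v) :
    ∃ τ', SMI M I τ' ∧ τ'.smallerLeft v + 1 = τ.smallerLeft v ∧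
      ∀ x ≠ v, τ'.smallerLeft x = τ.smallerLeft x := by
  obtain ⟨x, hx⟩ := Finset.card_pos.1 hpos
  simp only [Finset.mem_filter, Finset.mem_univ, true_and] at hx
  obtain ⟨a, hab, hτa, hbetween⟩ := exists_nearest_left (τ := τ) hx.2 (by simpa using hx.1)
  have hb : τ.symm v ∉ I := mt h.mem_iff.2 hv
  have ha : a ∉ I := fun ha => (h.apply_lt ha hab).not_gt hτa
  obtain ⟨j, hj, hbj, hvj⟩ := h.exists_mem_gt hb
  have hswap := smallerLeft_mul_swap hab hτa hbetween
  rw [τ.apply_symm_apply] at hswap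
  exact ⟨_, h.mul_swap hab ha hb ⟨j, hj, hbj, hτa.trans hvj⟩, hswap⟩

theorem exists_smallerLeft_succ (h : SMI M I τ) (hv : v ∉ M)
    (hpos : 0 < τ.smallerRightBefore I v) :
    ∃ τ', SMI M I τ' ∧ τ'.smallerLeft v = τ.smallerLeft v + 1 ∧
      ∀ x ≠ v, τ'.smallerLeft x = τ.smallerLeft x := by
  obtain ⟨x, hx⟩ := Finset.card_pos.1 hpos
  simp only [Finset.mem_filter, Finset.mem_univ, true_and] at hx
  obtain ⟨c, hbc, hcx, hτc, hbetween⟩ :=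
    exists_nearest_right (τ := τ) hx.2.1 (by simpa using hx.1)
  obtain ⟨j, hj, hjL, hvj⟩ := h.exists_eq_lastMaxAbove hv
  have hcj : c < j := by rw [Fin.le_def] at hcx; rw [Fin.lt_def]; omega
  have hb : τ.symm v ∉ I := mt h.mem_iff.2 hv
  have hc : c ∉ I := fun hc => (h.apply_lt hc hcj).not_gt (hvj.trans' (by simpa using hτc))
  set τ' := τ * swap (τ.symm v) c
  have h' : SMI M I τ' := h.mul_swap hbc hb hc ⟨j, hj, hcj, by simpa using hvj⟩
  have hτ' : τ' * swap (τ.symm v) c = τ := by simp [τ', mul_assoc]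
  have hτ'c : τ' c = v := by simp [τ']
  -- `τ` is obtained back from `τ'` by the exchange of `smallerLeft_mul_swap`
  obtain ⟨hv', hx'⟩ := smallerLeft_mul_swap (τ := τ') hbc
    (by simpa [τ', hτ'c] using hτc) (fun r hbr hrc => by
      simpa [τ', swap_apply_of_ne_of_ne hbr.ne' hrc.ne] using hbetween r hbr hrc)
  rw [hτ', hτ'c] at hv' hx'
  exact ⟨τ', h', hv'.symm, fun x hx => (hx' x hx).symm⟩

/-- Induction on the distance to `c`: each exchange moves one coordinate of the
`smallerLeft`-vector by one towards `c`, and the bound on `c` is the same for all of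
`S_n(M, I)`. -/
theorem exists_smallerLeft_eq (h : SMI M I τ) (c : Fin n → ℕ)
    (hc : ∀ v ∉ M, c v ≤ τ.smallerLeft v + τ.smallerRightBefore I v) :
    ∃ σ, SMI M I σ ∧ ∀ v ∉ M, σ.smallerLeft v = c v := by
  induction hd : ∑ v ∈ Mᶜ, (τ.smallerLeft v - c v + (c v - τ.smallerLeft v))
    using Nat.strong_induction_on generalizing τ with
  | _ d ih =>
    by_cases hall : ∀ v ∉ M, τ.smallerLeft v = c v
    · exact ⟨τ, h, hall⟩
    push Not at hall
    obtain ⟨v, hv, hne⟩ := hall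
    obtain ⟨τ', h', hcloser, hother⟩ : ∃ τ', SMI M I τ' ∧
        τ'.smallerLeft v - c v + (c v - τ'.smallerLeft v) <
          τ.smallerLeft v - c v + (c v - τ.smallerLeft v) ∧
        ∀ x ≠ v, τ'.smallerLeft x = τ.smallerLeft x := by
      rcases hne.lt_or_gt with hlt | hgt
      · have := hc v hv
        obtain ⟨τ', h', hτ', hother⟩ := h.exists_smallerLeft_succ hv (by omega)
        exact ⟨τ', h', by omega, hother⟩
      · obtain ⟨τ', h', hτ', hother⟩ := h.exists_smallerLeft_pred hv (by omega)
        exact ⟨τ', h', by omega, hother⟩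
    refine ih _ (hd ▸ Finset.sum_lt_sum (fun x _ => ?_) ⟨v, Finset.mem_compl.2 hv, hcloser⟩)
      h' (fun x hx => (h'.smallerLeft_add_smallerRightBefore_eq h hx).symm ▸ hc x hx) rfl
    rcases eq_or_ne x v with rfl | hxv
    · exact hcloser.le
    · rw [hother x hxv]

end SMI

/-- The involution `ψ`, defined on all of `S_n` with `M` and `I` read off from `τ`. -/
noncomputable def Equiv.Perm.mixPartner {n : ℕ} (τ : Perm (Fin n)) : Perm (Fin n) :=
  ((smi_rlMaxPositions τ).exists_smallerLeft_eq _ fun _ _ => Nat.le_add_left _ _).choose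

namespace SMI

variable {n : ℕ} {M I : Finset (Fin n)} {τ : Perm (Fin n)} {v : Fin n}

theorem mixPartner_spec (h : SMI M I τ) :
    SMI M I τ.mixPartner ∧
      ∀ v ∉ M, τ.mixPartner.smallerLeft v = τ.smallerRightBefore I v := by
  obtain ⟨rfl, rfl⟩ := h.eq_rlMaxPositions
  exact ((smi_rlMaxPositions τ).exists_smallerLeft_eq _ fun _ _ =>
    Nat.le_add_left _ _).choose_spec

theorem mixPartner (h : SMI M I τ) : SMI M I τ.mixPartner := h.mixPartner_spec.1

theorem smallerLeft_mixPartner (h : SMI M I τ) (hv : v ∉ M) :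
    τ.mixPartner.smallerLeft v = τ.smallerRightBefore I v := h.mixPartner_spec.2 v hv

theorem smallerRightBefore_mixPartner (h : SMI M I τ) (hv : v ∉ M) :
    τ.mixPartner.smallerRightBefore I v = τ.smallerLeft v := by
  have := h.mixPartner.smallerLeft_add_smallerRightBefore_eq h hv
  have := h.smallerLeft_mixPartner hv
  omega

theorem ca_eq_ci_mixPartner (h : SMI M I τ) (hv : v ∉ M) : ca τ v = ci τ.mixPartner v := by
  rw [h.ca_eq_smallerLeft hv, h.mixPartner.ci_eq_smallerRightBefore hv,
    h.smallerRightBefore_mixPartner hv]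

theorem ci_eq_ca_mixPartner (h : SMI M I τ) (hv : v ∉ M) : ci τ v = ca τ.mixPartner v := by
  rw [h.ci_eq_smallerRightBefore hv, h.mixPartner.ca_eq_smallerLeft hv,
    h.smallerLeft_mixPartner hv]

end SMI

namespace Equiv.Perm

variable {n : ℕ}

theorem mixPartner_involutive : Function.Involutive (mixPartner (n := n)) := fun τ =>
  have h := smi_rlMaxPositions τ
  h.mixPartner.mixPartner.eq_of_smallerLeft_eq h fun v hv => by
    rw [h.mixPartner.smallerLeft_mixPartner hv, h.smallerRightBefore_mixPartner hv]

theorem sum_ci_eq_Iplus (τ : Perm (Fin n)) : ∑ y, ci τ y = Iplus τ := by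
  rw [Iplus, Finset.card_equiv (τ.prodCongr τ) (t := {q : Fin n × Fin n |
    τ.symm q.1 < τ.symm q.2 ∧ q.2 < q.1 ∧ ∃ z, τ.symm q.2 < τ.symm z ∧ q.1 < z})
    fun p => ?_]
  · exact (Finset.card_filter_prod_eq_sum_left fun y x => τ.symm y < τ.symm x ∧
      x < y ∧ ∃ z, τ.symm x < τ.symm z ∧ y < z).symm
  · simp only [Finset.mem_filter, Finset.mem_univ, true_and, prodCongr_apply, Prod.map,
      symm_apply_apply]
    rw [τ.exists_congr_left]
    simp only [apply_symm_apply]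

theorem sum_ca_eq_card_filter (τ : Perm (Fin n)) : ∑ y, ca τ y =
    #{p : Fin n × Fin n | p.1 < p.2 ∧ τ p.1 < τ p.2 ∧ ∃ k, p.2 < k ∧ τ p.2 < τ k} := by
  rw [Finset.card_equiv (τ.prodCongr τ) (t := {q : Fin n × Fin n | τ.symm q.1 < τ.symm q.2 ∧
    q.1 < q.2 ∧ ∃ z, τ.symm q.2 < τ.symm z ∧ q.2 < z}) fun p => ?_]
  · exact (Finset.card_filter_prod_eq_sum_right fun x y => τ.symm x < τ.symm y ∧
      x < y ∧ ∃ z, τ.symm y < τ.symm z ∧ y < z).symm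
  · simp only [Finset.mem_filter, Finset.mem_univ, true_and, prodCongr_apply, Prod.map,
      symm_apply_apply]
    rw [τ.exists_congr_left]
    simp only [apply_symm_apply]

theorem Aminus_add_sum_ca (τ : Perm (Fin n)) :
    Aminus τ + ∑ y, ca τ y = #{p : Fin n × Fin n | p.1 < p.2 ∧ τ p.1 < τ p.2} := by
  rw [sum_ca_eq_card_filter, Aminus]
  simp only [Finset.card_filter, ← Finset.sum_add_distrib]
  refine Finset.sum_congr rfl fun p _ => ?_
  split_ifs <;> simp_all

theorem Aminus_add_Iplus_mixPartner (τ : Perm (Fin n)) :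
    Aminus τ.mixPartner + Iplus τ.mixPartner =
      #{p : Fin n × Fin n | p.1 < p.2 ∧ τ p.1 < τ p.2} := by
  have h := smi_rlMaxPositions τ
  rw [← sum_ci_eq_Iplus, ← h.Aminus_eq h.mixPartner, ← Aminus_add_sum_ca]
  congr 1
  refine Finset.sum_congr rfl fun y _ => ?_
  by_cases hy : y ∈ (rlMaxPositions τ).image τ
  · rw [h.ca_eq_zero hy, h.mixPartner.ci_eq_zero hy]
  · exact (h.ca_eq_ci_mixPartner hy).symm

theorem card_inv_mul_revPerm (τ : Perm (Fin n)) :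
    #{p : Fin n × Fin n | p.1 < p.2 ∧
      (τ * Fin.revPerm : Perm (Fin n)) p.2 < (τ * Fin.revPerm : Perm (Fin n)) p.1} =
      #{p : Fin n × Fin n | p.1 < p.2 ∧ τ p.1 < τ p.2} :=
  Finset.card_equiv ((Fin.revPerm.prodCongr Fin.revPerm).trans (Equiv.prodComm _ _))
    fun p => by simp

end Equiv.Perm

/-- For every `M, I ⊆ [n]` with `|M| = |I|` and `n ∈ M ∩ I` there is an involution
`ψ` of `S_n(M, I)` with `(ca(π), ci(π)) = (ci(ψπ), ca(ψπ))` which fixes `|A⁻|`;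
consequently the statistic `mix = |A⁻| + |I⁺|` is Mahonian, i.e. equidistributed
with the number of inversions over `S_n`. -/
theorem mix_is_mahonian (n : ℕ) (hn : 1 ≤ n) :
    (∀ M I : Finset (Fin n), M.card = I.card →
      (⟨n - 1, by omega⟩ : Fin n) ∈ M → (⟨n - 1, by omega⟩ : Fin n) ∈ I →
      ∃ ψ : {τ : Equiv.Perm (Fin n) // SMI M I τ} → {τ : Equiv.Perm (Fin n) // SMI M I τ},
        (∀ τ, ψ (ψ τ) = τ) ∧
        (∀ τ, ∀ y : Fin n, y ∉ M →
          ca (τ : {τ // SMI M I τ}).1 y = ci (ψ τ).1 y ∧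
          ci (τ : {τ // SMI M I τ}).1 y = ca (ψ τ).1 y) ∧
        (∀ τ, Aminus (τ : {τ // SMI M I τ}).1 = Aminus (ψ τ).1)) ∧
    (∀ m : ℕ,
      (univ.filter fun π : Equiv.Perm (Fin n) => Aminus π + Iplus π = m).card =
      (univ.filter fun π : Equiv.Perm (Fin n) =>
        (univ.filter fun p : Fin n × Fin n => p.1 < p.2 ∧ π p.2 < π p.1).card = m).card) := by
  refine ⟨fun M I _ _ _ => ⟨fun τ => ⟨τ.1.mixPartner, τ.2.mixPartner⟩,
    fun τ => Subtype.ext (mixPartner_involutive τ.1),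
    fun τ y hy => ⟨τ.2.ca_eq_ci_mixPartner hy, τ.2.ci_eq_ca_mixPartner hy⟩,
    fun τ => τ.2.Aminus_eq τ.2.mixPartner⟩, fun m => ?_⟩
  -- `π ↦ ψ(π) * rev` carries `mix` to the number of inversions
  refine Finset.card_equiv (mixPartner_involutive.toPerm _ |>.trans (Equiv.mulRight Fin.revPerm))
    fun π => ?_
  simp only [Finset.mem_filter, Finset.mem_univ, true_and, Equiv.trans_apply,
    Function.Involutive.coe_toPerm, Equiv.coe_mulRight]
  rw [card_inv_mul_revPerm, ← Aminus_add_Iplus_mixPartner, mixPartner_involutive π]
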